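/- Let k be a field of characteristic ≠ 2 and q a nondegenerate quadratic form of dimension 2n over k with trivial discriminant that is anisotropic. If K/k is a finite extension of odd degree, then q ⊗ K still has trivial discriminant and is anisotropic; in particular the discriminant is invariant under base change. -/

import Mathlib

open Polynomial IntermediateField

section SpringerTheorem

variable {k : Type*} [Field k]

private lemma exists_odd_irreducible_factor (N : ℕ) :
    ∀ h : k[X], h.natDegree ≤ N → h ≠ 0 → Odd h.natDegree →
    ∃ q : k[X], q.Monic ∧ Irreducible q ∧ Odd q.natDegree ∧ q ∣ h := by
  induction N with
  | zero =>
    intro h hN h0 hodd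
    rw [Nat.le_zero.mp hN] at hodd
    exact absurd hodd (by decide)
  | succ N ih =>
    intro h hN h0 hodd
    have hu : ¬ IsUnit h := fun hu => by
      rw [Polynomial.natDegree_eq_zero_of_isUnit hu] at hodd
      exact absurd hodd (by decide)
    obtain ⟨p, hpirr, hpdvd⟩ := WfDvdMonoid.exists_irreducible_factor hu h0
    have hp0 : p ≠ 0 := hpirr.ne_zero
    set p' := p * C (leadingCoeff p)⁻¹ with hp'
    have hp'm : p'.Monic := monic_mul_leadingCoeff_inv hp0
    have hassoc : Associated p p' := by
      refine ⟨(Polynomial.isUnit_C.mpr ((leadingCoeff_ne_zero.mpr hp0).isUnit.inv)).unit, ?_⟩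
      rw [IsUnit.unit_spec]
    have hp'irr : Irreducible p' := hassoc.irreducible hpirr
    have hp'dvd : p' ∣ h := (hassoc.symm.dvd).trans hpdvd
    have hdp' : 1 ≤ p'.natDegree := hp'irr.natDegree_pos
    by_cases hoddp : Odd p'.natDegree
    · exact ⟨p', hp'm, hp'irr, hoddp, hp'dvd⟩
    · obtain ⟨h₂, hh₂⟩ := hp'dvd
      have h₂0 : h₂ ≠ 0 := by rintro rfl; rw [mul_zero] at hh₂; exact h0 hh₂
      have hdeg : h.natDegree = p'.natDegree + h₂.natDegree := by
        rw [hh₂, Polynomial.natDegree_mul hp'm.ne_zero h₂0]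
      have hodd₂ : Odd h₂.natDegree := by
        rw [Nat.odd_iff] at hodd ⊢; rw [Nat.not_odd_iff] at hoddp; omega
      obtain ⟨q, h1, h2, h3, h4⟩ := ih h₂ (by omega) h₂0 hodd₂
      exact ⟨q, h1, h2, h3, h4.trans ⟨p', by rw [hh₂, mul_comm]⟩⟩

private lemma dvd_sum_mod {m : ℕ} (a : Fin m → k) (q : k[X]) (hq : q.Monic)
    (g : Fin m → k[X]) (hdvd : q ∣ ∑ i, C (a i) * g i ^ 2) :
    q ∣ ∑ i, C (a i) * (g i %ₘ q) ^ 2 := by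
  have hdiff : q ∣ (∑ i, C (a i) * g i ^ 2) - ∑ i, C (a i) * (g i %ₘ q) ^ 2 := by
    rw [← Finset.sum_sub_distrib]
    refine Finset.dvd_sum fun i _ => ?_
    have h1 : q ∣ g i - g i %ₘ q := by
      refine ⟨g i /ₘ q, ?_⟩
      have := Polynomial.modByMonic_add_div (g i) q
      linear_combination -this
    have h2 : C (a i) * g i ^ 2 - C (a i) * (g i %ₘ q) ^ 2
        = C (a i) * ((g i - g i %ₘ q) * (g i + g i %ₘ q)) := by ring
    rw [h2]
    exact Dvd.dvd.mul_left (h1.mul_right _) _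
  have h3 : (∑ i, C (a i) * (g i %ₘ q) ^ 2)
      = (∑ i, C (a i) * g i ^ 2) - ((∑ i, C (a i) * g i ^ 2) - ∑ i, C (a i) * (g i %ₘ q) ^ 2) := by
    ring
  rw [h3]
  exact dvd_sub hdvd hdiff

private lemma springer_core {m : ℕ} (a : Fin m → k)
    (haniso : ∀ c : Fin m → k, (∑ i, a i * c i ^ 2) = 0 → c = 0) :
    ∀ N : ℕ, ∀ (f : k[X]) (e : ℕ) (g : Fin m → k[X]),
      Irreducible f → Odd f.natDegree → f.natDegree + e ≤ N → e < f.natDegree →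
      (∀ i, (g i).natDegree ≤ e) → (∃ i, g i ≠ 0) →
      (f ∣ ∑ i, C (a i) * g i ^ 2) → False := by
  intro N
  induction N using Nat.strong_induction_on with
  | _ N IH =>
  rintro f e g hirr hodd hN he hdeg ⟨i₀, hi₀⟩ hdvd
  have hd1 : 1 ≤ f.natDegree := hirr.natDegree_pos
  set c : Fin m → k := fun i => (g i).coeff e with hc
  by_cases hc0 : c = 0
  · -- all leading candidate coefficients vanish : decrease e
    rcases Nat.eq_zero_or_pos e with rfl | he1
    · have h1 : g i₀ = C ((g i₀).coeff 0) := Polynomial.eq_C_of_natDegree_le_zero (hdeg i₀)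
      have h2 : (g i₀).coeff 0 = 0 := congrFun hc0 i₀
      exact hi₀ (by rw [h1, h2, map_zero])
    · refine IH (f.natDegree + (e - 1)) (by omega) f (e - 1) g hirr hodd le_rfl (by omega)
        (fun i => ?_) ⟨i₀, hi₀⟩ hdvd
      rcases eq_or_ne (g i) 0 with h0 | h0
      · simp [h0]
      · have h1 : (g i).natDegree ≤ e := hdeg i
        have h2 : (g i).natDegree ≠ e := by
          intro hne
          have := Polynomial.leadingCoeff_ne_zero.mpr h0
          rw [Polynomial.leadingCoeff, hne] at this
          exact this (congrFun hc0 i)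
        omega
  · -- top coefficients give a nonzero value of the form
    have hq : (∑ i, a i * c i ^ 2) ≠ 0 := fun h => hc0 (haniso c h)
    set P : k[X] := ∑ i, C (a i) * g i ^ 2 with hP
    have hcoeff : P.coeff (2 * e) = ∑ i, a i * c i ^ 2 := by
      rw [hP, Polynomial.finset_sum_coeff]
      refine Finset.sum_congr rfl fun i _ => ?_
      rw [Polynomial.coeff_C_mul, two_mul, sq, sq,
        Polynomial.coeff_mul_add_eq_of_natDegree_le (hdeg i) (hdeg i)]
    have hP0 : P ≠ 0 := fun h => hq (by rw [← hcoeff, h, Polynomial.coeff_zero])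
    have hPdeg_le : P.natDegree ≤ 2 * e := by
      refine Polynomial.natDegree_sum_le_of_forall_le _ _ fun i _ => ?_
      calc (C (a i) * g i ^ 2).natDegree ≤ (g i ^ 2).natDegree :=
            Polynomial.natDegree_C_mul_le _ _
        _ ≤ 2 * e := by
            rw [Polynomial.natDegree_pow]; exact Nat.mul_le_mul_left 2 (hdeg i)
    have hPdeg : P.natDegree = 2 * e :=
      le_antisymm hPdeg_le (Polynomial.le_natDegree_of_ne_zero (hcoeff ▸ hq))
    have hf0 : f ≠ 0 := hirr.ne_zero
    have hd2e : f.natDegree ≤ 2 * e := hPdeg ▸ Polynomial.natDegree_le_of_dvd hdvd hP0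
    obtain ⟨h, hPh⟩ := hdvd
    have hh0 : h ≠ 0 := fun h0 => hP0 (by rw [hPh, h0, mul_zero])
    have hhdeg : f.natDegree + h.natDegree = 2 * e := by
      rw [← hPdeg, hPh, Polynomial.natDegree_mul hf0 hh0]
    have hoddh : Odd h.natDegree := by
      rw [Nat.odd_iff] at hodd ⊢; omega
    obtain ⟨q, hqm, hqirr, hqodd, hqdvd⟩ :=
      exists_odd_irreducible_factor h.natDegree h le_rfl hh0 hoddh
    have hq1 : 1 ≤ q.natDegree := hqirr.natDegree_pos
    have hqdegle : q.natDegree ≤ h.natDegree := Polynomial.natDegree_le_of_dvd hqdvd hh0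
    have hqP : q ∣ P := hqdvd.trans ⟨f, by rw [hPh, mul_comm]⟩
    by_cases hall : ∀ i, q ∣ g i
    · -- divide all g i by q and recurse with same f, smaller e
      set g' : Fin m → k[X] := fun i => g i /ₘ q with hg'
      have hgq : ∀ i, g i = q * g' i := fun i => by
        conv_lhs => rw [← Polynomial.modByMonic_add_div (g i) q]
        rw [(Polynomial.modByMonic_eq_zero_iff_dvd hqm).mpr (hall i), zero_add]
      have hPQ : P = q ^ 2 * ∑ i, C (a i) * g' i ^ 2 := by
        rw [hP, Finset.mul_sum]
        refine Finset.sum_congr rfl fun i _ => ?_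
        rw [hgq i]; ring
      have hfq : ¬ f ∣ q := fun hfq => by
        have := Polynomial.natDegree_le_of_dvd hfq hqirr.ne_zero
        omega
      have hprime : Prime f := hirr.prime
      have hfQ : f ∣ ∑ i, C (a i) * g' i ^ 2 := by
        have hfP : f ∣ q ^ 2 * ∑ i, C (a i) * g' i ^ 2 := hPQ ▸ ⟨h, hPh⟩
        rcases hprime.dvd_mul.mp hfP with h1 | h1
        · exact absurd (hprime.dvd_of_dvd_pow h1) hfq
        · exact h1
      have he1 : 1 ≤ e := by omega
      refine IH (f.natDegree + (e - 1)) (by omega) f (e - 1) g' hirr hodd le_rfl (by omega)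
        (fun i => ?_) ⟨i₀, fun h0 => hi₀ (by rw [hgq i₀, h0, mul_zero])⟩ hfQ
      rcases eq_or_ne (g' i) 0 with h0 | h0
      · simp [h0]
      · have h1 := hdeg i
        rw [hgq i, Polynomial.natDegree_mul hqm.ne_zero h0] at h1
        omega
    · -- recurse with the new irreducible q
      push_neg at hall
      obtain ⟨i₁, hi₁⟩ := hall
      have hqne1 : q ≠ 1 := fun h1 => by simp [h1] at hq1
      refine IH (q.natDegree + (q.natDegree - 1)) (by omega) q (q.natDegree - 1)
        (fun i => g i %ₘ q) hqirr hqodd le_rfl (by omega) (fun i => ?_)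
        ⟨i₁, fun h0 => hi₁ ((Polynomial.modByMonic_eq_zero_iff_dvd hqm).mp h0)⟩
        (dvd_sum_mod a q hqm g hqP)
      show (g i %ₘ q).natDegree ≤ q.natDegree - 1
      rcases eq_or_ne (g i %ₘ q) 0 with h0 | h0
      · simp [h0]
      · have := Polynomial.natDegree_modByMonic_lt (g i) hqm hqne1
        omega

private lemma springer_adjoinRoot {m : ℕ} (a : Fin m → k)
    (haniso : ∀ c : Fin m → k, (∑ i, a i * c i ^ 2) = 0 → c = 0)
    (f : k[X]) (hm : f.Monic) (hirr : Irreducible f) (hodd : Odd f.natDegree)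
    (y : Fin m → AdjoinRoot f)
    (hy : (∑ i, algebraMap k (AdjoinRoot f) (a i) * y i ^ 2) = 0) : y = 0 := by
  choose g hg using fun i => AdjoinRoot.mk_surjective (y i)
  have hdvd : f ∣ ∑ i, C (a i) * g i ^ 2 := by
    rw [← AdjoinRoot.mk_eq_zero, map_sum, ← hy]
    refine Finset.sum_congr rfl fun i _ => ?_
    rw [map_mul, map_pow, hg, AdjoinRoot.algebraMap_eq]
    rfl
  by_cases hall : ∀ i, f ∣ g i
  · funext i
    rw [Pi.zero_apply, ← hg i, AdjoinRoot.mk_eq_zero.mpr (hall i)]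
  · exfalso
    push_neg at hall
    obtain ⟨i₁, hi₁⟩ := hall
    have hd1 : 1 ≤ f.natDegree := hirr.natDegree_pos
    have hne1 : f ≠ 1 := fun h1 => by simp [h1] at hd1
    refine springer_core a haniso (f.natDegree + (f.natDegree - 1)) f (f.natDegree - 1)
      (fun i => g i %ₘ f) hirr hodd le_rfl (by omega) (fun i => ?_)
      ⟨i₁, fun h0 => hi₁ ((Polynomial.modByMonic_eq_zero_iff_dvd hm).mp h0)⟩
      (dvd_sum_mod a f hm g hdvd)
    show (g i %ₘ f).natDegree ≤ f.natDegree - 1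
    rcases eq_or_ne (g i %ₘ f) 0 with h0 | h0
    · simp [h0]
    · have := Polynomial.natDegree_modByMonic_lt (g i) hm hne1
      omega

private lemma aniso_of_algEquiv {m : ℕ} {A B : Type*} [Field A] [Field B]
    [Algebra k A] [Algebra k B] (e : A ≃ₐ[k] B) (a : Fin m → k)
    (h : ∀ z : Fin m → A, (∑ i, algebraMap k A (a i) * z i ^ 2) = 0 → z = 0) :
    ∀ y : Fin m → B, (∑ i, algebraMap k B (a i) * y i ^ 2) = 0 → y = 0 := by
  intro y hy
  have h2 : (fun i => e.symm (y i)) = 0 := by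
    apply h
    have h3 : e.symm (∑ i, algebraMap k B (a i) * y i ^ 2)
        = ∑ i, algebraMap k A (a i) * e.symm (y i) ^ 2 := by
      rw [map_sum]
      exact Finset.sum_congr rfl fun i _ => by rw [map_mul, map_pow, AlgEquiv.commutes]
    rw [← h3, hy, map_zero]
  funext i
  have h4 := congrFun h2 i
  simp only [Pi.zero_apply] at h4 ⊢
  exact e.symm.injective (by rw [h4, map_zero])

end SpringerTheorem

section Main

private lemma springer_main : ∀ (d : ℕ), Odd d →
    ∀ (k K : Type u) [Field k] [Field K] [Algebra k K] [FiniteDimensional k K],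
    Module.finrank k K = d → ∀ {m : ℕ} (a : Fin m → k),
    (∀ c : Fin m → k, (∑ i, a i * c i ^ 2) = 0 → c = 0) →
    ∀ y : Fin m → K, (∑ i, algebraMap k K (a i) * y i ^ 2) = 0 → y = 0 := by
  intro d
  induction d using Nat.strong_induction_on with
  | _ d IH =>
  intro hodd k K _ _ _ _ hrank m a haniso y hy
  by_cases hbot : ∀ i, y i ∈ (⊥ : IntermediateField k K)
  · choose x hx using fun i => IntermediateField.mem_bot.mp (hbot i)
    have h1 : algebraMap k K (∑ i, a i * x i ^ 2) = 0 := by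
      rw [map_sum, ← hy]
      exact Finset.sum_congr rfl fun i _ => by rw [map_mul, map_pow, hx]
    have hx0 := haniso x ((algebraMap k K).injective (by rw [h1, map_zero]))
    funext i
    have h5 : x i = 0 := by rw [hx0]; rfl
    rw [Pi.zero_apply, ← hx i, h5, map_zero]
  · push_neg at hbot
    obtain ⟨j, hj⟩ := hbot
    set α := y j with hα
    have hint : IsIntegral k α := IsIntegral.of_finite k α
    have hr1 : Module.finrank k k⟮α⟯ ≠ 1 := fun h1 =>
      hj (IntermediateField.finrank_eq_one_iff.mp h1 ▸ IntermediateField.mem_adjoin_simple_self k α)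
    have htower : Module.finrank k k⟮α⟯ * Module.finrank k⟮α⟯ K = d := by
      rw [Module.finrank_mul_finrank, hrank]
    have hpos1 : 0 < Module.finrank k k⟮α⟯ := Module.finrank_pos
    have hpos2 : 0 < Module.finrank k⟮α⟯ K := Module.finrank_pos
    have hodds := Nat.odd_mul.mp (htower ▸ hodd)
    have hirr : Irreducible (minpoly k α) := minpoly.irreducible hint
    have hmono : (minpoly k α).Monic := minpoly.monic hint
    have hoddm : Odd (minpoly k α).natDegree := by
      rw [← IntermediateField.adjoin.finrank hint]; exact hodds.1
    haveI : Fact (Irreducible (minpoly k α)) := ⟨hirr⟩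
    have haniso1 : ∀ c : Fin m → k⟮α⟯,
        (∑ i, algebraMap k k⟮α⟯ (a i) * c i ^ 2) = 0 → c = 0 :=
      aniso_of_algEquiv (IntermediateField.adjoinRootEquivAdjoin k hint) a
        (fun z hz => springer_adjoinRoot a haniso _ hmono hirr hoddm z hz)
    have hlt : Module.finrank k⟮α⟯ K < d := by
      have h2 : 2 ≤ Module.finrank k k⟮α⟯ := by omega
      nlinarith [htower, hpos2]
    refine IH (Module.finrank k⟮α⟯ K) hlt hodds.2 k⟮α⟯ K rfl
      (fun i => algebraMap k k⟮α⟯ (a i)) haniso1 y ?_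
    rw [← hy]
    exact Finset.sum_congr rfl fun i _ => by
      rw [← IsScalarTower.algebraMap_apply]

/-- Let `q = ⟨a₁,…,a_{2n}⟩` be a nondegenerate (all `aᵢ ≠ 0`) diagonal
anisotropic quadratic form of even dimension `2n` over a field `k` of
characteristic `≠ 2`, with trivial discriminant, i.e. `(−1)ⁿ·a₁⋯a_{2n}` is a
square in `k`.  If `K/k` is a finite extension of odd degree, then the base
change of `q` to `K` still has trivial discriminant (the discriminant class
is preserved under base change) and is still anisotropic. -/
theorem trivial_discriminant_anisotropic_odd_extension
    (k K : Type*) [Field k] (hchar : ringChar k ≠ 2)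
    [Field K] [Algebra k K] [FiniteDimensional k K]
    (hodd : Odd (Module.finrank k K))
    (n : ℕ) (hn : 0 < n) (a : Fin (2 * n) → k) (ha : ∀ i, a i ≠ 0)
    (haniso : ∀ x : Fin (2 * n) → k, (∑ i, a i * x i ^ 2) = 0 → x = 0)
    (hdisc : IsSquare ((-1 : k) ^ n * ∏ i, a i)) :
    IsSquare ((-1 : K) ^ n * ∏ i, algebraMap k K (a i)) ∧
    (∀ y : Fin (2 * n) → K, (∑ i, algebraMap k K (a i) * y i ^ 2) = 0 → y = 0) := by
  constructor
  · obtain ⟨r, hr⟩ := hdisc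
    refine ⟨algebraMap k K r, ?_⟩
    have h1 := congrArg (algebraMap k K) hr
    rw [map_mul, map_mul, map_pow, map_neg, map_one, map_prod] at h1
    exact h1
  · -- transfer the problem to the bottom intermediate field, then apply Springer
    intro y hy
    set F := (⊥ : IntermediateField k K) with hF
    haveI : FiniteDimensional F K := FiniteDimensional.right k F K
    set e₀ := IntermediateField.botEquiv k K with he₀
    set a' : Fin (2 * n) → F := fun i => e₀.symm (a i) with ha'
    have hcoef : ∀ i, algebraMap F K (a' i) = algebraMap k K (a i) := by
      intro i
      rw [ha']
      show algebraMap F K (e₀.symm (a i)) = algebraMap k K (a i)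
      rw [IntermediateField.botEquiv_symm, ← IsScalarTower.algebraMap_apply]
    have haniso' : ∀ c : Fin (2 * n) → F, (∑ i, a' i * c i ^ 2) = 0 → c = 0 := by
      intro c hc
      have h2 : (∑ i, a i * (e₀ (c i)) ^ 2) = 0 := by
        have h3 := congrArg e₀ hc
        rw [map_sum, map_zero] at h3
        rw [← h3]
        exact Finset.sum_congr rfl fun i _ => by
          rw [map_mul, map_pow, ha']
          show a i * _ = e₀ (e₀.symm (a i)) * _
          rw [AlgEquiv.apply_symm_apply]
      have h4 := haniso _ h2
      funext i
      have h5 : e₀ (c i) = 0 := by rw [congrFun h4 i]; rfl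
      show c i = 0
      exact e₀.injective (by rw [h5, map_zero])
    have hrankF : Module.finrank F K = Module.finrank k K :=
      IntermediateField.finrank_bot'
    exact springer_main (Module.finrank F K) (hrankF ▸ hodd) F K rfl a' haniso' y
      (by rw [← hy]; exact Finset.sum_congr rfl fun i _ => by rw [hcoef i])

end Main
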